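/- Suppose T and U are standard finite trees, U is a simple extension of T, α ∈ ht[U] \ ht[T] with α < max(ht[T]), and β = min(ht[T] \ (α+1)). If a₀ ∈ U_α, a₀⁺ is the unique element of T_β above a₀, a₁ ∈ T, and a₀⁺ and a₁ are incomparable in T, then a₀ ∧_U a₁ = a₀⁺ ∧_T a₁. -/

import Mathlib

noncomputable section
open scoped Classical

namespace AKST

/-- The first uncountable ordinal. -/
def ω1 : Ordinal := (Cardinal.aleph 1).ord

/-- The second uncountable ordinal. -/
def ω2 : Ordinal := (Cardinal.aleph 2).ord

/-- The height of a countable ordinal `γ`: the unique `α` with `ω·α ≤ γ < ω·(α+1)`. -/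
def ht (γ : Ordinal) : Ordinal := γ / Ordinal.omega0

/-- A standard finite tree. -/
structure SFT where
  elems : Finset Ordinal
  lt : Ordinal → Ordinal → Prop
  zero_mem : 0 ∈ elems
  mem_ok : ∀ x ∈ elems, x = 0 ∨ (Ordinal.omega0 ≤ x ∧ x < ω1)
  lt_mem : ∀ {x y}, lt x y → x ∈ elems ∧ y ∈ elems
  lt_trans' : ∀ {x y z}, lt x y → lt y z → lt x z
  lt_irrefl' : ∀ x, ¬ lt x x
  pred_linear : ∀ {x y z}, lt y x → lt z x → lt y z ∨ y = z ∨ lt z y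
  lt_ht : ∀ {x y}, lt x y → ht x < ht y
  pred_level : ∀ x ∈ elems, ∀ α, (∃ z ∈ elems, ht z = α) → α < ht x →
    ∃ y ∈ elems, ht y = α ∧ lt y x

namespace SFT

/-- The non-strict tree order. -/
def le (T : SFT) (x y : Ordinal) : Prop := T.lt x y ∨ (x = y ∧ x ∈ T.elems)

/-- `ht[T]`: the set of nonzero heights of elements of `T`. -/
def heights (T : SFT) : Set Ordinal := {α | α ≠ 0 ∧ ∃ x ∈ T.elems, ht x = α}

/-- Level `α` of `T`. -/
def level (T : SFT) (α : Ordinal) : Set Ordinal := {x | x ∈ T.elems ∧ ht x = α}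

/-- `max(ht[T])`. -/
def maxHeight (T : SFT) : Ordinal := sSup T.heights

/-- The least element of `ht[T]` greater than `α`. -/
def minAbove (T : SFT) (α : Ordinal) : Ordinal := sInf {β | β ∈ T.heights ∧ α < β}

/-- The drop-down `x↾α`: the unique element of `T` of height `α` below `x`. -/
def drop (T : SFT) (α x : Ordinal) : Ordinal :=
  if h : ∃ y, y ∈ T.elems ∧ ht y = α ∧ T.lt y x then h.choose else 0

/-- `z` is the meet of `x` and `y` in `T`. -/
def isMeet (T : SFT) (x y z : Ordinal) : Prop :=
  T.le z x ∧ T.le z y ∧ ∀ w, T.le w x → T.le w y → T.le w z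

/-- The meet `x ∧_T y`. -/
def meet (T : SFT) (x y : Ordinal) : Ordinal :=
  if h : ∃ z, T.isMeet x y z then h.choose else 0

/-- `U` extends `T`. -/
def Ext (T U : SFT) : Prop :=
  (↑T.elems : Set Ordinal) ⊆ ↑U.elems ∧ ∀ {x y}, T.lt x y → U.lt x y

/-- `X` has unique drop-downs to `α` in `T`. -/
def UniqueDrops (T : SFT) (α : Ordinal) (X : Set Ordinal) : Prop :=
  ∀ x ∈ X, ∀ y ∈ X, T.drop α x = T.drop α y → x = y

/-- `U` is a simple extension of `T`. -/
def SimpleExt (U T : SFT) : Prop :=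
  Ext T U ∧
  (∀ x ∈ U.elems, x ∉ T.elems → ht x ∉ T.heights) ∧
  (∀ α, α ∈ U.heights → α ∉ T.heights → α < T.maxHeight →
     U.UniqueDrops α (T.level (T.minAbove α)))

/-- `x` and `y` are incomparable in `T`. -/
def Incomp (T : SFT) (x y : Ordinal) : Prop := x ≠ y ∧ ¬ T.lt x y ∧ ¬ T.lt y x

/-- `T` is normal: every element has successors at every higher occupied level. -/
def Normal (T : SFT) : Prop :=
  ∀ x ∈ T.elems, ∀ γ ∈ T.heights, ht x < γ → ∃ y ∈ T.elems, ht y = γ ∧ T.lt x y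

end SFT

/-! Partial functions on a tree, represented by their graphs. -/

def dom (f : Set (Ordinal × Ordinal)) : Set Ordinal := {x | ∃ y, (x, y) ∈ f}

def ran (f : Set (Ordinal × Ordinal)) : Set Ordinal := {y | ∃ x, (x, y) ∈ f}

/-- The graph is single-valued. -/
def FuncGraph (f : Set (Ordinal × Ordinal)) : Prop :=
  ∀ {x y y'}, (x, y) ∈ f → (x, y') ∈ f → y = y'

/-- The graph is injective. -/
def InjGraph (f : Set (Ordinal × Ordinal)) : Prop :=
  ∀ {x x' y}, (x, y) ∈ f → (x', y) ∈ f → x = x'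

/-- The graph is a partial function from `T` to `T`. -/
def Carr (T : SFT) (f : Set (Ordinal × Ordinal)) : Prop :=
  ∀ p ∈ f, p.1 ∈ T.elems ∧ p.2 ∈ T.elems

/-- Strictly increasing. -/
def StrictIncr (T : SFT) (f : Set (Ordinal × Ordinal)) : Prop :=
  ∀ {x y x' y'}, (x, y) ∈ f → (x', y') ∈ f → T.lt x x' → T.lt y y'

/-- Level preserving. -/
def LevelPres (f : Set (Ordinal × Ordinal)) : Prop :=
  ∀ p ∈ f, ht p.1 = ht p.2

/-- Downwards closed (the domain is closed under drop-downs). -/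
def DownClosedDom (T : SFT) (f : Set (Ordinal × Ordinal)) : Prop :=
  ∀ x y, (x, y) ∈ f → ∀ β ∈ T.heights, β < ht x →
    ∃ x' y', x' ∈ T.elems ∧ ht x' = β ∧ T.lt x' x ∧ (x', y') ∈ f

/-- No fixed points other than 0. -/
def NoFix (f : Set (Ordinal × Ordinal)) : Prop := ∀ x, (x, x) ∈ f → x = 0

/-- `f` is a standard function on `T`. -/
def IsStdFun (T : SFT) (f : Set (Ordinal × Ordinal)) : Prop :=
  Carr T f ∧ FuncGraph f ∧ InjGraph f ∧ StrictIncr T f ∧ LevelPres f ∧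
    DownClosedDom T f ∧ NoFix f

/-- `f^m(x) = y`, for `m ∈ {-1, 1}`. -/
def appPow (f : Set (Ordinal × Ordinal)) (m : ℤ) (x y : Ordinal) : Prop :=
  (m = 1 ∧ (x, y) ∈ f) ∨ (m = -1 ∧ (y, x) ∈ f)

/-- `X↾α` and `X` are `f`-consistent. -/
def Consistent (T : SFT) (f : Set (Ordinal × Ordinal)) (α : Ordinal) (X : Set Ordinal) : Prop :=
  ∀ x ∈ X, ∀ y ∈ X, ((T.drop α x, T.drop α y) ∈ f ↔ (x, y) ∈ f)

/-- The family `{F τ : τ ∈ A}` is separated on the tuple `a 0, ..., a (n-1)`. -/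
def SepOnTuple (F : Ordinal → Set (Ordinal × Ordinal)) (A : Finset Ordinal)
    (n : ℕ) (a : ℕ → Ordinal) : Prop :=
  ∀ i < n, ∀ j₀ < i, ∀ j₁ < i, ∀ m₀ m₁ : ℤ, ∀ τ₀ ∈ A, ∀ τ₁ ∈ A,
    (m₀ = 1 ∨ m₀ = -1) → (m₁ = 1 ∨ m₁ = -1) →
    appPow (F τ₀) m₀ (a i) (a j₀) → appPow (F τ₁) m₁ (a i) (a j₁) →
    j₀ = j₁ ∧ m₀ = m₁ ∧ τ₀ = τ₁

/-- The family is separated on the set `X`. -/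
def SepOnSet (F : Ordinal → Set (Ordinal × Ordinal)) (A : Finset Ordinal)
    (X : Set Ordinal) : Prop :=
  ∃ (n : ℕ) (a : ℕ → Ordinal), (∀ i < n, ∀ j < n, a i = a j → i = j) ∧
    X = a '' {i | i < n} ∧ SepOnTuple F A n a

/-- The family is `ρ`-separated on the tuple `a 0, ..., a (n-1)` (of elements of level `α`). -/
def RhoSepOnTuple (ρ : Ordinal → Ordinal → Ordinal) (F : Ordinal → Set (Ordinal × Ordinal))
    (A : Finset Ordinal) (α : Ordinal) (n : ℕ) (a : ℕ → Ordinal) : Prop :=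
  ∀ i < n, ∀ j₀ < i, ∀ j₁ < i, ∀ m₀ m₁ : ℤ, ∀ τ₀ ∈ A, ∀ τ₁ ∈ A,
    (m₀ = 1 ∨ m₀ = -1) → (m₁ = 1 ∨ m₁ = -1) →
    appPow (F τ₀) m₀ (a i) (a j₀) → appPow (F τ₁) m₁ (a i) (a j₁) →
    j₀ = j₁ ∧ ((m₀ = m₁ ∧ τ₀ = τ₁) ∨ α ≤ ρ τ₀ τ₁)

/-- The family is `ρ`-separated on the set `X ⊆ T_α`. -/
def RhoSepOnSet (ρ : Ordinal → Ordinal → Ordinal) (F : Ordinal → Set (Ordinal × Ordinal))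
    (A : Finset Ordinal) (α : Ordinal) (X : Set Ordinal) : Prop :=
  ∃ (n : ℕ) (a : ℕ → Ordinal), (∀ i < n, ∀ j < n, a i = a j → i = j) ∧
    X = a '' {i | i < n} ∧ RhoSepOnTuple ρ F A α n a

/-- There is a loop in `X` with respect to the family `{F τ : τ ∈ A}`. -/
def HasLoop (F : Ordinal → Set (Ordinal × Ordinal)) (A : Finset Ordinal)
    (X : Set Ordinal) : Prop :=
  ∃ p : ℕ, 4 ≤ p ∧ ∃ c : ℕ → Ordinal,
    (∀ i < p, c i ∈ X) ∧
    (∀ i < p - 1, ∀ j < p - 1, c i = c j → i = j) ∧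
    c 0 = c (p - 1) ∧
    (∀ i < p - 1, ∃ τ ∈ A, ∃ m : ℤ, (m = 1 ∨ m = -1) ∧ appPow (F τ) m (c i) (c (i + 1)))

/-- `p` is a member of `T ⊗ T`. -/
def InOtimes (T : SFT) (p : Ordinal × Ordinal) : Prop :=
  p.1 ∈ T.elems ∧ p.2 ∈ T.elems ∧ ht p.1 = ht p.2

/-- `f ⊆ T ⊗ T` is downwards closed as a subset of `T ⊗ T`. -/
def DCPairs (T : SFT) (f : Set (Ordinal × Ordinal)) : Prop :=
  ∀ p ∈ f, ∀ q, InOtimes T q → T.le q.1 p.1 → T.le q.2 p.2 → q ∈ f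

/-- The downward closure of `f` in `U`. -/
def dcl (U : SFT) (f : Set (Ordinal × Ordinal)) : Set (Ordinal × Ordinal) :=
  {p | InOtimes U p ∧ ∃ q ∈ f, U.le p.1 q.1 ∧ U.le p.2 q.2}

end AKST

/-!
Let `z` be the meet of `a₀⁺` and `a₁` in `T`. It lies strictly below `a₀⁺` at a `T`-level below `β`,
hence below `α`, so `z < a₀` in `U`. Conversely, every common `U`-lower bound `w` of two elements
of `T` lies below a common `T`-lower bound: if `w` is new, its level `γ` is new, and the elements
of `T` at level `min(ht[T] \ (γ+1))` below the two elements both drop down to `w`, so by unique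
drop-downs they coincide. Applied to `a₀⁺` and `a₁` this puts every common lower bound of `a₀`
and `a₁` below `z`.
-/

namespace AKST

lemma ht_zero : ht 0 = 0 := Ordinal.zero_div _

namespace SFT

variable {T U : SFT} {w x y z : Ordinal}

lemma le_trans (hxy : T.le x y) (hyz : T.le y z) : T.le x z := by
  rcases hxy with hxy | ⟨rfl, -⟩
  · rcases hyz with hyz | ⟨rfl, -⟩
    · exact Or.inl (T.lt_trans' hxy hyz)
    · exact Or.inl hxy
  · exact hyz

lemma le_antisymm (hxy : T.le x y) (hyx : T.le y x) : x = y := by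
  rcases hxy with hxy | ⟨rfl, -⟩
  · rcases hyx with hyx | ⟨rfl, -⟩
    · exact absurd (T.lt_trans' hxy hyx) (T.lt_irrefl' x)
    · rfl
  · rfl

lemma meet_eq_of_isMeet (h : T.isMeet x y z) : T.meet x y = z := by
  have hex : ∃ z, T.isMeet x y z := ⟨z, h⟩
  rw [meet, dif_pos hex]
  exact T.le_antisymm (h.2.2 _ hex.choose_spec.1 hex.choose_spec.2.1)
    (hex.choose_spec.2.2 _ h.1 h.2.1)

lemma ht_eq_zero_iff (hx : x ∈ T.elems) : ht x = 0 ↔ x = 0 := by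
  refine ⟨fun h => ?_, fun h => h ▸ ht_zero⟩
  rcases T.mem_ok x hx with rfl | ⟨hωx, -⟩
  · rfl
  · exact absurd h ((Ordinal.div_pos Ordinal.omega0_ne_zero).2 hωx).ne'

lemma ne_zero_of_lt (h : T.lt w x) : x ≠ 0 := by
  rintro rfl
  exact zero_le.not_gt (ht_zero ▸ T.lt_ht h)

lemma ht_mem_heights (hx : x ∈ T.elems) (hx0 : x ≠ 0) : ht x ∈ T.heights :=
  ⟨fun h => hx0 ((ht_eq_zero_iff hx).1 h), x, hx, rfl⟩

lemma zero_le_of_mem (hx : x ∈ T.elems) : T.le 0 x := by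
  rcases eq_or_ne x 0 with rfl | hx0
  · exact Or.inr ⟨rfl, hx⟩
  obtain ⟨y, hy, hy0, hyx⟩ := T.pred_level x hx 0 ⟨0, T.zero_mem, ht_zero⟩
    (pos_iff_ne_zero.2 (ht_mem_heights hx hx0).1)
  exact (ht_eq_zero_iff hy).1 hy0 ▸ Or.inl hyx

/-- The predecessors of a node form a chain, ordered by height. -/
lemma le_of_le_of_le_of_ht_le (hx : T.le x z) (hy : T.le y z) (hxy : ht x ≤ ht y) :
    T.le x y := by
  rcases hy with hy | ⟨rfl, -⟩
  · rcases hx with hx | ⟨rfl, -⟩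
    · rcases T.pred_linear hx hy with h | h | h
      · exact Or.inl h
      · exact Or.inr ⟨h, (T.lt_mem hx).1⟩
      · exact absurd (T.lt_ht h) hxy.not_gt
    · exact absurd (T.lt_ht hy) hxy.not_gt
  · exact hx

lemma eq_of_lt_of_lt_of_ht_eq (hx : T.lt x z) (hy : T.lt y z) (hxy : ht x = ht y) : x = y :=
  T.le_antisymm (le_of_le_of_le_of_ht_le (Or.inl hx) (Or.inl hy) hxy.le)
    (le_of_le_of_le_of_ht_le (Or.inl hy) (Or.inl hx) hxy.ge)

lemma drop_eq_of_lt (hwx : T.lt w x) : T.drop (ht w) x = w := by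
  have hex : ∃ y, y ∈ T.elems ∧ ht y = ht w ∧ T.lt y x := ⟨w, (T.lt_mem hwx).1, rfl, hwx⟩
  rw [drop, dif_pos hex]
  exact eq_of_lt_of_lt_of_ht_eq hex.choose_spec.2.2 hwx hex.choose_spec.2.1

lemma heights_finite (T : SFT) : T.heights.Finite :=
  (T.elems.finite_toSet.image ht).subset fun _ ⟨_, x, hx, hxα⟩ => ⟨x, hx, hxα⟩

lemma ht_le_maxHeight (hx : x ∈ T.elems) (hx0 : x ≠ 0) : ht x ≤ T.maxHeight :=
  le_csSup T.heights_finite.bddAbove (ht_mem_heights hx hx0)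

lemma minAbove_le {α γ : Ordinal} (hγ : γ ∈ T.heights) (hαγ : α < γ) : T.minAbove α ≤ γ :=
  csInf_le' ⟨hγ, hαγ⟩

lemma exists_isMeet (hx : x ∈ T.elems) (hy : y ∈ T.elems) : ∃ z, T.isMeet x y z := by
  set S := T.elems.filter fun w => T.le w x ∧ T.le w y
  have h0S : (0 : Ordinal) ∈ S :=
    Finset.mem_filter.2 ⟨T.zero_mem, zero_le_of_mem hx, zero_le_of_mem hy⟩
  obtain ⟨z, hzS, hzmax⟩ := S.exists_max_image ht ⟨0, h0S⟩
  obtain ⟨-, hzx, hzy⟩ := Finset.mem_filter.1 hzS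
  refine ⟨z, hzx, hzy, fun w hwx hwy => ?_⟩
  have hwS : w ∈ S := Finset.mem_filter.2
    ⟨by rcases hwx with h | ⟨rfl, h⟩; exacts [(T.lt_mem h).1, h], hwx, hwy⟩
  exact le_of_le_of_le_of_ht_le hwx hzx (hzmax w hwS)

lemma Incomp.not_le (h : T.Incomp x y) : ¬ T.le x y := by
  rintro (hxy | ⟨hxy, -⟩)
  exacts [h.2.1 hxy, h.1 hxy]

namespace Ext

lemma le (hTU : SFT.Ext T U) (h : T.le x y) : U.le x y := by
  rcases h with h | ⟨rfl, hx⟩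
  · exact Or.inl (hTU.2 h)
  · exact Or.inr ⟨rfl, hTU.1 hx⟩

lemma lt_of_lt (hTU : SFT.Ext T U) (hx : x ∈ T.elems) (hy : y ∈ T.elems) (h : U.lt x y) :
    T.lt x y := by
  obtain ⟨x', hx', hx'x, hx'y⟩ := T.pred_level y hy (ht x) ⟨x, hx, rfl⟩ (U.lt_ht h)
  rwa [eq_of_lt_of_lt_of_ht_eq h (hTU.2 hx'y) hx'x.symm]

lemma le_of_le (hTU : SFT.Ext T U) (hx : x ∈ T.elems) (hy : y ∈ T.elems) (h : U.le x y) :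
    T.le x y := by
  rcases h with h | ⟨rfl, -⟩
  · exact Or.inl (hTU.lt_of_lt hx hy h)
  · exact Or.inr ⟨rfl, hx⟩

lemma exists_mem_level_minAbove (hTU : SFT.Ext T U) (hx : x ∈ T.elems) (hwx : U.lt w x) :
    ∃ y ∈ T.level (T.minAbove (ht w)), U.lt w y ∧ T.le y x := by
  have hwx_ht : ht w < ht x := U.lt_ht hwx
  have hxH : ht x ∈ T.heights := ht_mem_heights hx (U.ne_zero_of_lt hwx)
  have hδ : T.minAbove (ht w) ∈ {β | β ∈ T.heights ∧ ht w < β} := csInf_mem ⟨ht x, hxH, hwx_ht⟩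
  rcases (minAbove_le hxH hwx_ht).eq_or_lt with hδx | hδx
  · exact ⟨x, ⟨hx, hδx.symm⟩, hwx, Or.inr ⟨rfl, hx⟩⟩
  obtain ⟨y, hy, hyδ, hyx⟩ := T.pred_level x hx _ hδ.1.2 hδx
  refine ⟨y, ⟨hy, hyδ⟩, ?_, Or.inl hyx⟩
  have hwy_ht : ht w < ht y := hyδ ▸ hδ.2
  rcases le_of_le_of_le_of_ht_le (Or.inl hwx) (Or.inl (hTU.2 hyx)) hwy_ht.le with h | h
  exacts [h, absurd (h.1 ▸ hwy_ht) (lt_irrefl _)]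

end Ext

lemma SimpleExt.exists_common_lowerBound_ge (h : SimpleExt U T) {x' : Ordinal}
    (hx : x ∈ T.elems) (hx' : x' ∈ T.elems) (hwx : U.le w x) (hwx' : U.le w x') :
    ∃ y, T.le y x ∧ T.le y x' ∧ U.le w y := by
  obtain ⟨hTU, hnew, hdrops⟩ := h
  by_cases hwT : w ∈ T.elems
  · exact ⟨w, hTU.le_of_le hwT hx hwx, hTU.le_of_le hwT hx' hwx', Or.inr ⟨rfl, hTU.1 hwT⟩⟩
  have strict : ∀ {v}, v ∈ T.elems → U.le w v → U.lt w v := by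
    rintro v hv (hwv | ⟨rfl, -⟩)
    exacts [hwv, absurd hv hwT]
  have hwU : w ∈ U.elems := (U.lt_mem (strict hx hwx)).1
  have hw0 : w ≠ 0 := fun hw0 => hwT (hw0 ▸ T.zero_mem)
  have hwmax : ht w < T.maxHeight :=
    (U.lt_ht (strict hx hwx)).trans_le (ht_le_maxHeight hx (U.ne_zero_of_lt (strict hx hwx)))
  obtain ⟨y, hyδ, hwy, hyx⟩ := hTU.exists_mem_level_minAbove hx (strict hx hwx)
  obtain ⟨y', hy'δ, hwy', hy'x'⟩ := hTU.exists_mem_level_minAbove hx' (strict hx' hwx')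
  have hyy' : y = y' := hdrops _ (ht_mem_heights hwU hw0) (hnew w hwU hwT) hwmax y hyδ y' hy'δ
    (by rw [drop_eq_of_lt hwy, drop_eq_of_lt hwy'])
  exact ⟨y, hyx, hyy' ▸ hy'x', Or.inl hwy⟩

end SFT

end AKST

open AKST AKST.SFT

theorem stmt_3_general (T U : SFT) (h : SimpleExt U T) (α β a₀ a₀p a₁ : Ordinal)
    (hβ : β = T.minAbove α)
    (ha₀ : a₀ ∈ U.level α)
    (ha₀p : a₀p ∈ T.level β) (hup : U.lt a₀ a₀p)
    (ha₁ : a₁ ∈ T.elems) (hinc : T.Incomp a₀p a₁) :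
    U.meet a₀ a₁ = T.meet a₀p a₁ := by
  obtain ⟨z, hz⟩ := exists_isMeet ha₀p.1 ha₁
  have hza₀p : T.lt z a₀p := by
    rcases hz.1 with hlt | ⟨rfl, -⟩
    exacts [hlt, absurd hz.2.1 hinc.not_le]
  have hzα : ht z ≤ α := by
    refine not_lt.1 fun hαz => ?_
    have hz0 : z ≠ 0 := by
      rintro rfl
      exact zero_le.not_gt (ht_zero ▸ hαz)
    have hβz : β ≤ ht z := hβ ▸ minAbove_le (ht_mem_heights (T.lt_mem hza₀p).1 hz0) hαz
    exact hβz.not_gt (ha₀p.2 ▸ T.lt_ht hza₀p)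
  have hUmeet : U.isMeet a₀ a₁ z := by
    refine ⟨le_of_le_of_le_of_ht_le (Or.inl (h.1.2 hza₀p)) (Or.inl hup) (ha₀.2 ▸ hzα),
      h.1.le hz.2.1, fun w hwa₀ hwa₁ => ?_⟩
    obtain ⟨y, hya₀p, hya₁, hwy⟩ := h.exists_common_lowerBound_ge ha₀p.1 ha₁
      (U.le_trans hwa₀ (Or.inl hup)) hwa₁
    exact U.le_trans hwy (h.1.le (hz.2.2 y hya₀p hya₁))
  rw [meet_eq_of_isMeet hUmeet, meet_eq_of_isMeet hz]

/-- For a simple extension `U` of `T`, a new level `α < max(ht[T])`,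
`β = min(ht[T] \ (α+1))`, `a₀ ∈ U_α` with `a₀⁺` the unique element of `T_β` above `a₀`,
and `a₁ ∈ T` incomparable with `a₀⁺` in `T`, we have `a₀ ∧_U a₁ = a₀⁺ ∧_T a₁`. -/
theorem stmt_3 (T U : SFT) (h : SimpleExt U T) (α β a₀ a₀p a₁ : Ordinal)
    (hα : α ∈ U.heights) (hαT : α ∉ T.heights) (hαm : α < T.maxHeight)
    (hβ : β = T.minAbove α)
    (ha₀ : a₀ ∈ U.level α)
    (ha₀p : a₀p ∈ T.level β) (hup : U.lt a₀ a₀p)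
    (ha₁ : a₁ ∈ T.elems) (hinc : T.Incomp a₀p a₁) :
    U.meet a₀ a₁ = T.meet a₀p a₁ :=
  stmt_3_general T U h α β a₀ a₀p a₁ hβ ha₀ ha₀p hup ha₁ hinc
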